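/- arXiv:2001.01627 — 7 statements merged into one kernel-verified Lean document; each statement's English description precedes it below -/
import Mathlib

section
/- A free product of locally indicable groups is locally indicable. (Two-factor case: if A and B are locally indicable, then A * B is locally indicable.) -/
/-!
If a finitely generated subgroup `K` of `A ∗ B` has nontrivial image in `A` or in `B`, it maps
onto `ℤ` through that image. Otherwise `K` lies in the Cartesian subgroup, the kernel of
`A ∗ B → A × B`. The commutators `⁅a, b⁆` with `a ≠ 1`, `b ≠ 1` generate it freely, by ping-pong on
reduced words: `⁅a, b⁆` sends every word not starting with the letters `b a` to one starting with
`a b`. So `K` is a nontrivial subgroup of a free group, hence free (Nielsen–Schreier), and it maps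
onto `ℤ`.
-/

/-- A group is locally indicable if every nontrivial finitely generated subgroup
surjects onto `ℤ`. -/
def LocallyIndicable (G : Type*) [Group G] : Prop :=
  ∀ K : Subgroup G, K ≠ ⊥ → K.FG →
    ∃ f : K →* Multiplicative ℤ, Function.Surjective f

universe u v

open Function
open scoped commutatorElement Pointwise

section Indicable

variable {G H : Type*} [Group G] [Group H]

theorem Subgroup.FG.map {K : Subgroup G} (hK : K.FG) (f : G →* H) : (K.map f).FG := by
  classical
  obtain ⟨S, rfl⟩ := hK
  exact ⟨S.image f, by rw [Finset.coe_image, MonoidHom.map_closure]⟩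

theorem LocallyIndicable.exists_surjective_of_map_ne_bot (hH : LocallyIndicable H) (f : G →* H)
    {K : Subgroup G} (hK : K.FG) (hKf : K.map f ≠ ⊥) :
    ∃ g : K →* Multiplicative ℤ, Surjective g := by
  obtain ⟨g, hg⟩ := hH _ hKf (hK.map f)
  exact ⟨g.comp (f.subgroupMap K), hg.comp (f.subgroupMap_surjective K)⟩

theorem IsFreeGroup.exists_surjective_multiplicative_int (F : Type*) [Group F] [IsFreeGroup F]
    [Nontrivial F] : ∃ f : F →* Multiplicative ℤ, Surjective f := by
  obtain ⟨x⟩ : Nonempty (IsFreeGroup.Generators F) := by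
    by_contra! h
    exact not_subsingleton F (IsFreeGroup.toFreeGroup F).toEquiv.subsingleton
  refine ⟨IsFreeGroup.lift fun _ => Multiplicative.ofAdd 1,
    fun z => ⟨IsFreeGroup.of x ^ z.toAdd, ?_⟩⟩
  simp [← ofAdd_zsmul]

theorem Subgroup.exists_surjective_of_le_of_isFreeGroup {K N : Subgroup G} [IsFreeGroup N]
    (hKN : K ≤ N) (hK : K ≠ ⊥) : ∃ f : K →* Multiplicative ℤ, Surjective f := by
  let e := Subgroup.subgroupOfEquivOfLe hKN
  have : Nontrivial K := (Subgroup.nontrivial_iff_ne_bot K).mpr hK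
  have : Nontrivial (K.subgroupOf N) := e.toEquiv.nontrivial
  obtain ⟨f, hf⟩ := IsFreeGroup.exists_surjective_multiplicative_int (K.subgroupOf N)
  exact ⟨f.comp e.symm.toMonoidHom, hf.comp e.symm.surjective⟩

end Indicable

section PingPong

variable {G α : Type*} [Group G] [MulAction G α]

theorem not_isOfFinOrder_of_smul_compl_subset {g : G} {X Y : Set α} (hXY : Disjoint X Y)
    (hX : g • Yᶜ ⊆ X) {p : α} (hpX : p ∉ X) (hpY : p ∉ Y) : ¬IsOfFinOrder g := by
  have hpow : ∀ n : ℕ, g ^ (n + 1) • p ∈ X := by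
    intro n
    induction n with
    | zero => simpa using hX (Set.smul_mem_smul_set hpY)
    | succ n ih =>
      rw [pow_succ', mul_smul]
      exact hX (Set.smul_mem_smul_set (Set.disjoint_left.mp hXY ih))
  rw [isOfFinOrder_iff_pow_eq_one]
  rintro ⟨n, hn, hgn⟩
  obtain ⟨k, rfl⟩ := Nat.exists_eq_add_one_of_ne_zero hn.ne'
  exact hpX (by simpa [hgn] using hpow k)

theorem FreeGroup.injective_lift_of_unique {ι : Type*} [Unique ι] {a : ι → G}
    (ha : ¬IsOfFinOrder (a default)) : Injective (FreeGroup.lift a) := by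
  have hlift : ∀ x, FreeGroup.lift a x = a default ^ FreeGroup.equivIntOfUnique x := fun x => by
    conv_lhs => rw [← FreeGroup.equivIntOfUnique.symm_apply_apply x]
    simp [FreeGroup.equivIntOfUnique]
  intro x y hxy
  rw [hlift, hlift] at hxy
  exact FreeGroup.equivIntOfUnique.injective (injective_zpow_iff_not_isOfFinOrder.mpr ha hxy)

/-- `FreeGroup.injective_lift_of_ping_pong` needs two generators; a point outside all the
ping-pong sets also covers the case of a single one. -/
theorem FreeGroup.injective_lift_of_ping_pong_of_notMem {ι G : Type u} [Group G] [MulAction G α]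
    (a : ι → G) (X Y : ι → Set α) (hXdisj : Pairwise (Disjoint on X))
    (hYdisj : Pairwise (Disjoint on Y)) (hXYdisj : ∀ i j, Disjoint (X i) (Y j))
    (hX : ∀ i, a i • (Y i)ᶜ ⊆ X i) (hY : ∀ i, a⁻¹ i • (X i)ᶜ ⊆ Y i)
    (p : α) (hpX : ∀ i, p ∉ X i) (hpY : ∀ i, p ∉ Y i) : Injective (FreeGroup.lift a) := by
  rcases subsingleton_or_nontrivial ι with hι | hι
  · rcases isEmpty_or_nonempty ι with hι' | ⟨⟨i⟩⟩
    · exact injective_of_subsingleton _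
    · have : Unique ι := uniqueOfSubsingleton i
      exact injective_lift_of_unique
        (not_isOfFinOrder_of_smul_compl_subset (hXYdisj _ _) (hX _) (hpX _) (hpY _))
  · exact injective_lift_of_ping_pong a X Y
      (fun i => ⟨a i • p, hX i (Set.smul_mem_smul_set (hpY i))⟩) hXdisj hYdisj hXYdisj hX hY

end PingPong

namespace Monoid.CoprodI

section Words

variable {ι : Type*} {M : ι → Type*} [∀ i, Monoid (M i)]

def Word.startingWith {i j : ι} (a : M i) (b : M j) : Set (Word M) :=
  {w | w.toList.take 2 = [⟨i, a⟩, ⟨j, b⟩]}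

theorem Word.disjoint_startingWith {i j i' j' : ι} {a : M i} {b : M j} {a' : M i'} {b' : M j'}
    (h : ((⟨i, a⟩, ⟨j, b⟩) : (Σ i, M i) × (Σ i, M i)) ≠ (⟨i', a'⟩, ⟨j', b'⟩)) :
    Disjoint (startingWith a b) (startingWith a' b') :=
  Set.disjoint_left.mpr fun _ hw hw' => h <| by
    obtain ⟨hi, hj⟩ := List.cons_eq_cons.mp (hw.symm.trans hw')
    exact Prod.ext hi (List.singleton_inj.mp hj)

theorem Word.empty_notMem_startingWith {i j : ι} (a : M i) (b : M j) :
    empty ∉ startingWith a b := by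
  simp [startingWith, empty]

variable [DecidableEq ι] [∀ i, DecidableEq (M i)]

theorem Word.toList_of_smul_of_fstIdx_ne {i : ι} {m : M i} (hm : m ≠ 1) {w : Word M}
    (hw : w.fstIdx ≠ some i) : (of m • w).toList = ⟨i, m⟩ :: w.toList := by
  rw [← Word.cons_eq_smul (h1 := hw) (h2 := hm)]
  rfl

theorem Word.fstIdx_of_smul_of_fstIdx_ne {i : ι} {m : M i} (hm : m ≠ 1) {w : Word M}
    (hw : w.fstIdx ≠ some i) : (of m • w).fstIdx = some i := by
  simp [Word.fstIdx, toList_of_smul_of_fstIdx_ne hm hw]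

end Words

variable {ι : Type u} [DecidableEq ι] {G : ι → Type v} [∀ i, Group (G i)]

theorem commutatorElement_smul_mem_startingWith [∀ i, DecidableEq (G i)] {i j : ι} (hij : i ≠ j)
    {a : G i} {b : G j} (ha : a ≠ 1) (hb : b ≠ 1) {w : Word G}
    (hw : w ∉ Word.startingWith b a) : ⁅of a, of b⁆ • w ∈ Word.startingWith a b := by
  -- If `v` does not start in `G j`, the word `a b v` is reduced; if it does, `w = b a v` is.
  set v := of a⁻¹ • of b⁻¹ • w
  by_cases hvj : v.fstIdx = some j
  · refine absurd ?_ hw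
    have hvi : v.fstIdx ≠ some i := by simpa [hvj] using hij.symm
    have hwv : w = of b • of a • v := by simp [v, ← mul_smul]
    rw [Word.startingWith, Set.mem_ofPred_eq, hwv, Word.toList_of_smul_of_fstIdx_ne hb
      (by simpa [Word.fstIdx_of_smul_of_fstIdx_ne ha hvi] using hij),
      Word.toList_of_smul_of_fstIdx_ne ha hvi]
    rfl
  · have hcw : ⁅of a, of b⁆ • w = of a • of b • v := by
      simp [v, commutatorElement_def, mul_smul]
    rw [Word.startingWith, Set.mem_ofPred_eq, hcw, Word.toList_of_smul_of_fstIdx_ne ha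
      (by simpa [Word.fstIdx_of_smul_of_fstIdx_ne hb hvj] using hij.symm),
      Word.toList_of_smul_of_fstIdx_ne hb hvj]
    rfl

theorem injective_lift_commutatorElement {i j : ι} (hij : i ≠ j) {κ : Type max u v}
    {a : κ → G i} {b : κ → G j} (ha : ∀ k, a k ≠ 1) (hb : ∀ k, b k ≠ 1)
    (hab : Injective fun k => (a k, b k)) :
    Injective (FreeGroup.lift fun k => ⁅of (a k), of (b k)⁆) := by
  classical
  refine FreeGroup.injective_lift_of_ping_pong_of_notMem _
    (fun k => Word.startingWith (a k) (b k)) (fun k => Word.startingWith (b k) (a k))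
    (fun k l hkl => Word.disjoint_startingWith fun h => hkl (hab (by simpa using h)))
    (fun k l hkl => Word.disjoint_startingWith fun h => hkl (hab (by simpa [and_comm] using h)))
    (fun k l => Word.disjoint_startingWith (by simp [hij]))
    ?_ ?_ Word.empty (fun k => Word.empty_notMem_startingWith _ _)
    (fun k => Word.empty_notMem_startingWith _ _)
  · rintro k _ ⟨w, hw, rfl⟩
    exact commutatorElement_smul_mem_startingWith hij (ha k) (hb k) hw
  · rintro k _ ⟨w, hw, rfl⟩
    rw [Pi.inv_apply, commutatorElement_inv]
    exact commutatorElement_smul_mem_startingWith hij.symm (hb k) (ha k) hw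

end Monoid.CoprodI

namespace Monoid.Coprod

variable {A B : Type*} [Group A] [Group B]

variable (A B) in
def liftCommutators : FreeGroup {p : A × B // p.1 ≠ 1 ∧ p.2 ≠ 1} →* A ∗ B :=
  FreeGroup.lift fun p => ⁅(inl p.1.1 : A ∗ B), inr p.1.2⁆

theorem commutatorElement_inl_inr_mem_range (a : A) (b : B) :
    ⁅(inl a : A ∗ B), inr b⁆ ∈ (liftCommutators A B).range := by
  by_cases ha : a = 1
  · simp [ha]
  by_cases hb : b = 1
  · simp [hb]
  exact ⟨FreeGroup.of ⟨(a, b), ha, hb⟩, FreeGroup.lift_apply_of⟩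

theorem exists_eq_inl_mul_inr_mul_mem_range (g : A ∗ B) :
    ∃ a b, ∃ n ∈ (liftCommutators A B).range, g = inl a * inr b * n := by
  induction g using induction_on' with
  | one => exact ⟨1, 1, 1, one_mem _, by simp⟩
  | inl_mul m g ih =>
    obtain ⟨a, b, n, hn, rfl⟩ := ih
    exact ⟨m * a, b, n, hn, by simp [mul_assoc]⟩
  | inr_mul m g ih =>
    obtain ⟨a, b, n, hn, rfl⟩ := ih
    refine ⟨a, m * b, ⁅inl a⁻¹, inr (m * b)⁻¹⁆⁻¹ * ⁅inl a⁻¹, inr b⁻¹⁆ * n,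
      mul_mem (mul_mem (inv_mem (commutatorElement_inl_inr_mem_range _ _))
        (commutatorElement_inl_inr_mem_range _ _)) hn, ?_⟩
    simp only [commutatorElement_def, map_mul, map_inv]
    group

theorem range_liftCommutators_le : (liftCommutators A B).range ≤ fst.ker ⊓ snd.ker :=
  le_inf
    ((MonoidHom.range_le_ker_iff _ _).mpr <| FreeGroup.ext_hom _ _ fun p => by
      simp [liftCommutators, map_commutatorElement])
    ((MonoidHom.range_le_ker_iff _ _).mpr <| FreeGroup.ext_hom _ _ fun p => by
      simp [liftCommutators, map_commutatorElement])

theorem range_liftCommutators : (liftCommutators A B).range = fst.ker ⊓ snd.ker := by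
  refine le_antisymm range_liftCommutators_le fun g hg => ?_
  obtain ⟨a, b, n, hn, rfl⟩ := exists_eq_inl_mul_inr_mul_mem_range g
  obtain ⟨hna, hnb⟩ : fst n = 1 ∧ snd n = 1 := range_liftCommutators_le hn
  simp only [Subgroup.mem_inf, MonoidHom.mem_ker, map_mul, fst_apply_inl, fst_apply_inr,
    snd_apply_inl, snd_apply_inr, hna, hnb, mul_one, one_mul] at hg
  simpa [hg.1, hg.2] using hn

theorem injective_liftCommutators : Injective (liftCommutators A B) := by
  -- `A ∗ B` acts on reduced words over two copies of itself, `A` through the first copy and `B`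
  -- through the second; the ping-pong takes place there.
  let ofTrue := CoprodI.of (M := fun _ : Bool => A ∗ B) (i := true)
  let ofFalse := CoprodI.of (M := fun _ : Bool => A ∗ B) (i := false)
  let φ := lift (ofTrue.comp inl) (ofFalse.comp inr)
  have hφ : φ.comp (liftCommutators A B) =
      FreeGroup.lift fun p => ⁅ofTrue (inl p.1.1), ofFalse (inr p.1.2)⁆ :=
    FreeGroup.ext_hom _ _ fun p => by simp [φ, liftCommutators, map_commutatorElement]
  refine Injective.of_comp (f := φ) ?_
  rw [← MonoidHom.coe_comp, hφ]
  refine CoprodI.injective_lift_commutatorElement (by decide) (fun p => ?_) (fun p => ?_)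
    fun p q hpq => ?_
  · exact (map_ne_one_iff inl inl_injective).mpr p.2.1
  · exact (map_ne_one_iff inr inr_injective).mpr p.2.2
  · simp only [Prod.mk.injEq, inl_injective.eq_iff, inr_injective.eq_iff] at hpq
    exact Subtype.ext (Prod.ext hpq.1 hpq.2)

instance : IsFreeGroup (liftCommutators A B).range :=
  IsFreeGroup.ofMulEquiv (MonoidHom.ofInjective injective_liftCommutators)

end Monoid.Coprod

open Monoid.Coprod in
/-- The free product of two locally indicable groups is locally indicable. -/
theorem locallyIndicable_coprod
    (A B : Type*) [Group A] [Group B]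
    (hA : LocallyIndicable A) (hB : LocallyIndicable B) :
    LocallyIndicable (Monoid.Coprod A B) := by
  intro K hK hKfg
  obtain hKA | hKA := ne_or_eq (K.map fst) ⊥
  · exact hA.exists_surjective_of_map_ne_bot fst hKfg hKA
  obtain hKB | hKB := ne_or_eq (K.map snd) ⊥
  · exact hB.exists_surjective_of_map_ne_bot snd hKfg hKB
  have hKN : K ≤ (liftCommutators A B).range := by
    rw [range_liftCommutators]
    exact le_inf ((Subgroup.map_eq_bot_iff K).mp hKA) ((Subgroup.map_eq_bot_iff K).mp hKB)
  exact Subgroup.exists_surjective_of_le_of_isFreeGroup hKN hK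
end

section
/- Let L be a finitely generated subgroup of F₂ × F₂ (the direct product of two free groups of rank 2). Then either L contains a subgroup isomorphic to F₂ × F₂, or L is isomorphic to a free group, or to a direct product ℤ × F for some free group F. -/
/-!
Let `q₁, q₂ : L → F₂` be the two coordinate projections. Each kernel embeds in `F₂` through the
other projection, so it is free, and elements of `ker q₁` commute with elements of `ker q₂`. If
both kernels contain a free group of rank two, these two copies generate `F₂ × F₂` inside `L`.
Otherwise one kernel, say `ker q₁`, is cyclic. If it is trivial, `L ≅ q₁(L)` is free by
Nielsen–Schreier. If it is infinite cyclic, conjugation acts on it by `±1`, and `-1` is impossible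
because no nontrivial element `x` of a free group is conjugate to its inverse: if `g x g⁻¹ = x⁻¹`,
then `g²` commutes with `x`, so they have a common nontrivial power, which conjugation by `g` both
fixes and inverts. So `ker q₁` is central, and the central extension of the free group `q₁(L)` by
it splits as a direct product `ℤ × q₁(L)`.
-/

open Function Subgroup

universe u

namespace IsFreeGroup

variable (G : Type*) [Group G] [IsFreeGroup G]

theorem isCyclic_or_exists_injective_freeGroup_fin_two :
    IsCyclic G ∨ ∃ f : FreeGroup (Fin 2) →* G, Injective f := by
  by_cases h : ∃ a b : Generators G, a ≠ b
  · obtain ⟨a, b, hab⟩ := h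
    refine .inr ⟨(toFreeGroup G).symm.toMonoidHom.comp (FreeGroup.map ![a, b]),
      (toFreeGroup G).symm.injective.comp (FreeGroup.map_injective ?_)⟩
    intro i j
    fin_cases i <;> fin_cases j <;> simp [hab, hab.symm]
  · have : Subsingleton (Generators G) := ⟨by simpa using h⟩
    refine .inl ((MulEquiv.isCyclic (toFreeGroup G)).mpr ?_)
    cases isEmpty_or_nonempty (Generators G)
    · infer_instance
    · have : Unique (Generators G) := uniqueOfSubsingleton (Classical.arbitrary _)
      infer_instance

theorem isCyclic_of_isMulCommutative [IsMulCommutative G] : IsCyclic G := by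
  refine (isCyclic_or_exists_injective_freeGroup_fin_two G).resolve_right ?_
  rintro ⟨f, hf⟩
  have : FreeGroup.of (0 : Fin 2) * FreeGroup.of 1 ≠ FreeGroup.of 1 * FreeGroup.of 0 := by decide
  exact this (hf (by simp only [map_mul, mul_comm']))

end IsFreeGroup

namespace FreeGroup

variable {α : Type*} {a b g x : FreeGroup α}

theorem exists_zpow_eq_zpow_of_commute (h : Commute a b) (ha : a ≠ 1) :
    ∃ m n : ℤ, m ≠ 0 ∧ b ^ m = a ^ n := by
  have : IsMulCommutative (closure {a, b}) := isMulCommutative_closure (by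
    rintro x (rfl | rfl) y (rfl | rfl)
    exacts [rfl, h.eq, h.symm.eq, rfl])
  obtain ⟨c, hc⟩ := (IsFreeGroup.isCyclic_of_isMulCommutative (closure {a, b})).exists_generator
  obtain ⟨m, hm⟩ := mem_zpowers_iff.mp (hc ⟨a, subset_closure (by simp)⟩)
  obtain ⟨n, hn⟩ := mem_zpowers_iff.mp (hc ⟨b, subset_closure (by simp)⟩)
  refine ⟨m, n, ?_, ?_⟩
  · rintro rfl
    exact ha (by simpa using congrArg Subtype.val hm.symm)
  · have : (c ^ n) ^ m = (c ^ m) ^ n := by rw [← zpow_mul, ← zpow_mul, mul_comm]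
    rw [hm, hn] at this
    simpa using congrArg Subtype.val this

theorem eq_one_of_mul_mul_inv_eq_inv (h : g * x * g⁻¹ = x⁻¹) : x = 1 := by
  have hconj (n : ℤ) : g * x ^ n * g⁻¹ = x ^ (-n) := by rw [← conj_zpow, h, inv_zpow, zpow_neg]
  have hsq : Commute (g ^ 2) x := by
    refine mul_inv_eq_iff_eq_mul.mp ?_
    calc g ^ 2 * x * (g ^ 2)⁻¹ = g * (g * x * g⁻¹) * g⁻¹ := by rw [sq]; group
      _ = g * x⁻¹ * g⁻¹ := by rw [h]
      _ = (g * x * g⁻¹)⁻¹ := by group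
      _ = x := by rw [h, inv_inv]
  by_cases hg : g ^ 2 = 1
  · obtain rfl : g = 1 := sq_eq_one.mp hg
    exact self_eq_inv.mp (by simpa using h)
  obtain ⟨m, n, hm, hmn⟩ := exists_zpow_eq_zpow_of_commute hsq hg
  have : x ^ (-m) = x ^ m := by
    rw [← hconj, hmn, ((Commute.refl g).pow_right 2).zpow_right n |>.eq, mul_inv_cancel_right]
  rwa [zpow_neg, inv_eq_self, IsMulTorsionFree.zpow_eq_one_iff_left hm] at this

theorem commute_of_mul_mul_inv_eq_zpow {t s : ℤ} (ht : g * x * g⁻¹ = x ^ t)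
    (hs : g⁻¹ * x * g = x ^ s) : Commute g x := by
  obtain rfl | hx := eq_or_ne x 1
  · exact Commute.one_right g
  have hts : x ^ (t * s) = x ^ (1 : ℤ) :=
    calc x ^ (t * s) = (g * x * g⁻¹) ^ s := by rw [zpow_mul, ht]
      _ = g * (g⁻¹ * x * g) * g⁻¹ := by rw [conj_zpow, hs]
      _ = x ^ (1 : ℤ) := by group
  rcases Int.eq_one_or_neg_one_of_mul_eq_one'
    (injective_zpow_iff_not_isOfFinOrder.mpr (not_isOfFinOrder_of_isMulTorsionFree hx) hts)
    with ⟨rfl, -⟩ | ⟨rfl, -⟩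
  · exact mul_inv_eq_iff_eq_mul.mp (by simpa using ht)
  · exact absurd (eq_one_of_mul_mul_inv_eq_inv (by simpa using ht)) hx

end FreeGroup

theorem Subgroup.le_center_of_isCyclic {L β : Type*} [Group L] {K : Subgroup L} [K.Normal]
    [IsCyclic K] (r : L →* FreeGroup β) (hr : Set.InjOn r K) : K ≤ center L := by
  obtain ⟨k, rfl⟩ := (K.isCyclic_iff_exists_zpowers_eq_top).mp ‹_›
  rw [zpowers_le, mem_center_iff]
  intro l
  have hconj (l : L) : l * k * l⁻¹ ∈ zpowers k := Normal.conj_mem ‹_› k (mem_zpowers k) l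
  obtain ⟨t, ht⟩ := mem_zpowers_iff.mp (hconj l)
  obtain ⟨s, hs⟩ := mem_zpowers_iff.mp (hconj l⁻¹)
  have hcomm : Commute (r l) (r k) := FreeGroup.commute_of_mul_mul_inv_eq_zpow (t := t) (s := s)
    (by simpa using congrArg r ht.symm) (by simpa using congrArg r hs.symm)
  have : l * k * l⁻¹ = k := hr (hconj l) (mem_zpowers k) (by simp [hcomm.eq])
  exact mul_inv_eq_iff_eq_mul.mp this

theorem MonoidHom.nonempty_ker_prod_mulEquiv_of_ker_le_center {L Q : Type*} [Group L] [Group Q]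
    [IsFreeGroup Q] (f : L →* Q) (hf : Surjective f) (hcent : f.ker ≤ center L) :
    Nonempty (f.ker × Q ≃* L) := by
  let σ : Q →* L := IsFreeGroup.lift (surjInv hf ∘ IsFreeGroup.of)
  have hσ (w : Q) : f (σ w) = w := by
    refine DFunLike.congr_fun (IsFreeGroup.ext_hom (f := f.comp σ) (g := MonoidHom.id Q) ?_) w
    simp [σ, surjInv_eq hf]
  let Φ := MonoidHom.noncommCoprod f.ker.subtype σ fun k w ↦
    (mem_center_iff.mp (hcent k.2) (σ w)).symm
  refine ⟨MulEquiv.ofBijective Φ ⟨?_, fun l ↦ ⟨(⟨l * (σ (f l))⁻¹, ?_⟩, f l), ?_⟩⟩⟩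
  · rw [injective_iff_map_eq_one]
    rintro ⟨k, w⟩ h
    change (k : L) * σ w = 1 at h
    have hw : w = 1 := by simpa [hσ, MonoidHom.mem_ker.mp k.2] using congrArg f h
    subst hw
    simpa using h
  · simp [hσ]
  · exact inv_mul_cancel_right l (σ (f l))

section JointlyInjective

variable {L G H : Type*} [Group L] [Group G] [Group H] {q : L →* G} {r : L →* H}

theorem MonoidHom.injective_comp_ker_subtype (hqr : Injective (q.prod r)) :
    Injective (r.comp q.ker.subtype) := by
  rw [injective_iff_map_eq_one]
  exact fun k hk ↦ Subtype.ext ((injective_iff_map_eq_one _).mp hqr k (Prod.ext k.2 hk))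

theorem MonoidHom.commute_of_mem_ker (hqr : Injective (q.prod r)) {k k' : L} (hk : k ∈ q.ker)
    (hk' : k' ∈ r.ker) : Commute k k' := by
  refine commutatorElement_eq_one_iff_commute.mp ((injective_iff_map_eq_one _).mp hqr _ ?_)
  simp [commutatorElement_def, MonoidHom.mem_ker.mp hk, MonoidHom.mem_ker.mp hk']

theorem MonoidHom.exists_subgroup_mulEquiv_prod {A B : Type*} [Group A] [Group B]
    (hqr : Injective (q.prod r)) (f : A →* r.ker) (g : B →* q.ker) (hf : Injective f)
    (hg : Injective g) : ∃ K : Subgroup L, Nonempty (K ≃* A × B) := by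
  let Φ := MonoidHom.noncommCoprod (r.ker.subtype.comp f) (q.ker.subtype.comp g) fun a b ↦
    (commute_of_mem_ker hqr (g b).2 (f a).2).symm
  suffices Injective Φ from ⟨Φ.range, ⟨(MonoidHom.ofInjective this).symm⟩⟩
  rw [injective_iff_map_eq_one]
  rintro ⟨a, b⟩ h
  change (f a : L) * g b = 1 at h
  have hfa : (f a : L) = 1 := by
    refine (injective_iff_map_eq_one _).mp hqr _ (Prod.ext ?_ (f a).2)
    simpa [MonoidHom.mem_ker.mp (g b).2] using congrArg q h
  have hgb : (g b : L) = 1 := by simpa [hfa] using h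
  simp only [Prod.mk_eq_one]
  exact ⟨(injective_iff_map_eq_one f).mp hf a (Subtype.ext hfa),
    (injective_iff_map_eq_one g).mp hg b (Subtype.ext hgb)⟩

theorem MonoidHom.isFreeGroup_ker {L H : Type u} [Group L] [Group H] [IsFreeGroup H] {G : Type*}
    [Group G] {q : L →* G} {r : L →* H} (hqr : Injective (q.prod r)) : IsFreeGroup q.ker :=
  IsFreeGroup.ofMulEquiv (MonoidHom.ofInjective (injective_comp_ker_subtype hqr)).symm

end JointlyInjective

theorem MonoidHom.exists_mulEquiv_freeGroup_or_int_prod_of_isCyclic_ker {L β : Type*}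
    {G : Type u} [Group L] [Group G] [IsFreeGroup G] {q : L →* G} {r : L →* FreeGroup β}
    (hqr : Injective (q.prod r)) [IsCyclic q.ker] :
    (∃ ι : Type u, Nonempty (L ≃* FreeGroup ι)) ∨
      ∃ ι : Type u, Nonempty (L ≃* Multiplicative ℤ × FreeGroup ι) := by
  obtain hbot | hnt := q.ker.bot_or_nontrivial
  · have hq : Injective q := (MonoidHom.ker_eq_bot_iff q).mp hbot
    exact .inl ⟨_, ⟨(MonoidHom.ofInjective hq).trans (IsFreeGroup.toFreeGroup q.range)⟩⟩
  have hinj := injective_comp_ker_subtype hqr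
  have : IsMulTorsionFree q.ker := hinj.isMulTorsionFree
  obtain ⟨k, hk⟩ := exists_ne (1 : q.ker)
  have : Infinite q.ker := Infinite.of_injective _
    (injective_zpow_iff_not_isOfFinOrder.mpr (not_isOfFinOrder_of_isMulTorsionFree hk))
  have hcent : q.ker ≤ center L := le_center_of_isCyclic r (Set.injOn_iff_injective.mpr hinj)
  obtain ⟨e⟩ := nonempty_ker_prod_mulEquiv_of_ker_le_center q.rangeRestrict
    q.rangeRestrict_surjective (by rwa [ker_rangeRestrict])
  refine .inr ⟨_, ⟨e.symm.trans (MulEquiv.prodCongr ?_ (IsFreeGroup.toFreeGroup q.range))⟩⟩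
  exact (MulEquiv.subgroupCongr (ker_rangeRestrict q)).trans intCyclicMulEquiv.symm

theorem subgroup_of_F2_prod_F2_classification_general
    (L : Subgroup (FreeGroup (Fin 2) × FreeGroup (Fin 2))) :
    (∃ H : Subgroup L,
        Nonempty (H ≃* (FreeGroup (Fin 2) × FreeGroup (Fin 2)))) ∨
    (∃ ι : Type, Nonempty (L ≃* FreeGroup ι)) ∨
    (∃ ι : Type, Nonempty (L ≃* (Multiplicative ℤ × FreeGroup ι))) := by
  let q₁ := (MonoidHom.fst _ _).comp L.subtype
  let q₂ := (MonoidHom.snd _ _).comp L.subtype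
  have h₁₂ : Injective (q₁.prod q₂) := fun x y h ↦
    Subtype.ext (Prod.ext (congrArg Prod.fst h) (congrArg Prod.snd h))
  have h₂₁ : Injective (q₂.prod q₁) := fun x y h ↦
    Subtype.ext (Prod.ext (congrArg Prod.snd h) (congrArg Prod.fst h))
  have := MonoidHom.isFreeGroup_ker h₁₂
  have := MonoidHom.isFreeGroup_ker h₂₁
  rcases IsFreeGroup.isCyclic_or_exists_injective_freeGroup_fin_two q₁.ker with _ | ⟨f₁, hf₁⟩
  · exact .inr (MonoidHom.exists_mulEquiv_freeGroup_or_int_prod_of_isCyclic_ker h₁₂)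
  rcases IsFreeGroup.isCyclic_or_exists_injective_freeGroup_fin_two q₂.ker with _ | ⟨f₂, hf₂⟩
  · exact .inr (MonoidHom.exists_mulEquiv_freeGroup_or_int_prod_of_isCyclic_ker h₂₁)
  exact .inl (MonoidHom.exists_subgroup_mulEquiv_prod h₁₂ f₂ f₁ hf₂ hf₁)

/-- A finitely generated subgroup of `F₂ × F₂` either contains a copy of
`F₂ × F₂`, or is free, or is isomorphic to `ℤ × F` for a free group `F`. -/
theorem subgroup_of_F2_prod_F2_classification
    (L : Subgroup (FreeGroup (Fin 2) × FreeGroup (Fin 2))) (hfg : L.FG) :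
    (∃ H : Subgroup L,
        Nonempty (H ≃* (FreeGroup (Fin 2) × FreeGroup (Fin 2)))) ∨
    (∃ ι : Type, Nonempty (L ≃* FreeGroup ι)) ∨
    (∃ ι : Type, Nonempty (L ≃* (Multiplicative ℤ × FreeGroup ι))) :=
  subgroup_of_F2_prod_F2_classification_general L
end

section
/- Let L be a subgroup of F₂ × F₂ such that the kernel of the first coordinate projection restricted to L is infinite cyclic and the image of L under the first projection is free. Then L is isomorphic to ℤ × F for a free group F. -/
/-!
The kernel `K ≅ ℤ` of the first projection is normal in `L`, so each `x ∈ L` acts on it by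
conjugation as `±1`. Acting as `-1` would make `b ≠ 1`, where `(1, b)` generates `K`, conjugate
to its inverse in a free group; but `y b y⁻¹ = b⁻¹` gives `(y b)² = y²`, hence `y b = y` since roots
are unique in free groups (`IsMulTorsionFree`). So `K` is central, and since the image of the first
projection is free the extension splits as a direct product `L ≅ K × F`.
-/

open Function

theorem eq_one_of_mul_mul_inv_eq_inv {G : Type*} [Group G] [IsMulTorsionFree G] {y b : G}
    (h : y * b * y⁻¹ = b⁻¹) : b = 1 := by
  have hyb : y * b = b⁻¹ * y := mul_inv_eq_iff_eq_mul.1 h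
  have hyb' : y * b⁻¹ = b * y := by
    rw [← mul_inv_eq_iff_eq_mul]
    calc y * b⁻¹ * y⁻¹ = (y * b * y⁻¹)⁻¹ := by group
      _ = b := by rw [h, inv_inv]
  have hsq : (y * b) ^ 2 = y ^ 2 :=
    calc (y * b) ^ 2 = b⁻¹ * (y * b⁻¹) * y := by rw [sq, hyb]; group
      _ = y ^ 2 := by rw [hyb', sq]; group
  simpa using pow_left_injective two_ne_zero hsq

theorem Subgroup.conj_eq_self_or_eq_inv_of_mulEquiv_int {G : Type*} [Group G] {K : Subgroup G}
    [K.Normal] (e : K ≃* Multiplicative ℤ) (g : G) :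
    (∀ k ∈ K, g * k * g⁻¹ = k) ∨ ∀ k ∈ K, g * k * g⁻¹ = k⁻¹ := by
  let φ : ℤ ≃+ ℤ := MulEquiv.toAdditive (e.symm.trans ((MulAut.conjNormal g).trans e))
  have hφ (k : K) : φ (e k).toAdd = (e (MulAut.conjNormal g k)).toAdd := by
    change (e (MulAut.conjNormal g (e.symm (e k)))).toAdd = _
    rw [e.symm_apply_apply]
  rcases Int.addEquiv_eq_refl_or_neg φ with hid | hneg
  · left
    intro k hk
    have := hφ ⟨k, hk⟩
    rw [hid] at this
    simpa using congrArg Subtype.val (e.injective (Multiplicative.toAdd.injective this)).symm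
  · right
    intro k hk
    have := hφ ⟨k, hk⟩
    rw [hneg] at this
    have hinv : e (MulAut.conjNormal g ⟨k, hk⟩) = e ⟨k, hk⟩⁻¹ := by
      apply Multiplicative.toAdd.injective
      rw [map_inv, toAdd_inv, ← this]
      rfl
    simpa using congrArg Subtype.val (e.injective hinv)

theorem Subgroup.ker_fst_comp_subtype_le_center {G H : Type*} [Group G] [Group H]
    [IsMulTorsionFree H] (L : Subgroup (G × H))
    (e : ((MonoidHom.fst G H).comp L.subtype).ker ≃* Multiplicative ℤ) :
    ((MonoidHom.fst G H).comp L.subtype).ker ≤ Subgroup.center L := by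
  intro k hk
  rw [Subgroup.mem_center_iff]
  intro x
  rcases Subgroup.conj_eq_self_or_eq_inv_of_mulEquiv_int e x with hfix | hinv
  · exact mul_inv_eq_iff_eq_mul.1 (hfix k hk)
  · exfalso
    set k₀ := e.symm (Multiplicative.ofAdd 1)
    have hk₀ : ((k₀ : L) : G × H).1 = 1 := k₀.2
    have hk₀' : ((k₀ : L) : G × H).2 = 1 :=
      eq_one_of_mul_mul_inv_eq_inv (congrArg (fun z : L => (z : G × H).2) (hinv k₀ k₀.2))
    have : k₀ = 1 := Subtype.ext (Subtype.ext (Prod.ext hk₀ hk₀'))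
    simp [k₀] at this

noncomputable def MonoidHom.kerProdMulEquivOfRightInverse {G H : Type*} [Group G] [Group H]
    (f : G →* H) (s : H →* G) (hs : RightInverse s f) (hcenter : f.ker ≤ Subgroup.center G) :
    f.ker × H ≃* G :=
  MulEquiv.ofBijective
    (MonoidHom.noncommCoprod f.ker.subtype s fun k h =>
      Commute.symm (Subgroup.mem_center_iff.1 (hcenter k.2) (s h)))
    ⟨by
      rw [injective_iff_map_eq_one]
      rintro ⟨k, h⟩ hkh
      rw [MonoidHom.noncommCoprod_apply] at hkh
      have hh : h = 1 := by simpa [MonoidHom.mem_ker.1 k.2, hs h] using congrArg f hkh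
      subst hh
      simpa using hkh,
    fun g => ⟨(⟨g * (s (f g))⁻¹, by simp [hs (f g)]⟩, f g), by
      simp [MonoidHom.noncommCoprod_apply]⟩⟩

theorem FreeGroup.exists_rightInverse_of_surjective {G ι : Type*} [Group G] (f : G →* FreeGroup ι)
    (hf : Surjective f) : ∃ s : FreeGroup ι →* G, RightInverse s f := by
  refine ⟨FreeGroup.lift (surjInv hf ∘ FreeGroup.of), fun w => ?_⟩
  have : f.comp (FreeGroup.lift (surjInv hf ∘ FreeGroup.of)) = MonoidHom.id _ :=
    FreeGroup.ext_hom _ _ fun i => by simp [surjInv_eq hf]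
  exact DFunLike.congr_fun this w

/-- If `L ≤ F₂ × F₂` is a subgroup such that the kernel of the first coordinate
projection restricted to `L` is infinite cyclic and the image of `L` under the
first projection is free, then `L ≅ ℤ × F` for some free group `F`. -/
theorem subgroup_of_F2_prod_F2_z_times_free
    (L : Subgroup (FreeGroup (Fin 2) × FreeGroup (Fin 2)))
    (hker : Nonempty
      (((MonoidHom.fst (FreeGroup (Fin 2)) (FreeGroup (Fin 2))).comp
          L.subtype).ker ≃* Multiplicative ℤ))
    (himg : ∃ ι : Type, Nonempty
      ((L.map (MonoidHom.fst (FreeGroup (Fin 2)) (FreeGroup (Fin 2)))) ≃*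
        FreeGroup ι)) :
    ∃ ι : Type, Nonempty (L ≃* (Multiplicative ℤ × FreeGroup ι)) := by
  obtain ⟨e⟩ := hker
  obtain ⟨ι, ⟨q⟩⟩ := himg
  set π := (MonoidHom.fst (FreeGroup (Fin 2)) (FreeGroup (Fin 2))).comp L.subtype
  let f : L →* FreeGroup ι := (q : _ →* FreeGroup ι).comp ((MonoidHom.fst _ _).subgroupMap L)
  have hf : Surjective f := q.surjective.comp (MonoidHom.subgroupMap_surjective _ _)
  have hkerf : f.ker = π.ker := by
    ext x
    simp [f, π, Subtype.ext_iff]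
  obtain ⟨s, hs⟩ := FreeGroup.exists_rightInverse_of_surjective f hf
  have hcenter : f.ker ≤ Subgroup.center L :=
    hkerf ▸ Subgroup.ker_fst_comp_subtype_le_center L e
  exact ⟨ι, ⟨(MonoidHom.kerProdMulEquivOfRightInverse f s hs hcenter).symm.trans
    (MulEquiv.prodCongr ((MulEquiv.subgroupCongr hkerf).trans e) (MulEquiv.refl _))⟩⟩
end

section
/- Any subgroup of F₂ × F₂ that is isomorphic to F₂ × F₂ and is contained in a direct product decomposition ⟨a,b⟩ × ⟨c,d⟩ (with ⟨a,b⟩, ⟨c,d⟩ free of rank 2) has the form L₁ × L₂ where L₁ ≤ ⟨a,b⟩ and L₂ ≤ ⟨c,d⟩. -/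
/-!
A free group of rank at most one is abelian, and one of larger rank has trivial centre: a
nontrivial reduced word commuting with a generator `x` must begin with `x` or `x⁻¹`. Applied,
through Nielsen–Schreier, to the centralizer of `z`, this shows that an element of a free group
commuting with two non-commuting elements is trivial.

Write `L ≅ M × N` with `M`, `N` non-abelian and commuting elementwise. If the first projection of
`M` is non-abelian, the first projection of `N` commutes with it and so is trivial; then the
second projection of `N` is non-abelian, which kills the second projection of `M`. Hence
`M ≤ F₂ × 1` and `N ≤ 1 × F₂` (or the reverse), and `L = π₁(M) × π₂(N)`.
-/

namespace FreeGroup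

variable {α : Type*}

theorem toWord_of_mul_of_ne [DecidableEq α] {x : α} {z : FreeGroup α} {p : α × Bool}
    {t : List (α × Bool)} (hz : z.toWord = p :: t) (hp : p.1 ≠ x) :
    (of x * z).toWord = (x, true) :: p :: t := by
  have hred : IsReduced ((x, true) :: p :: t) :=
    isReduced_cons_cons.2 ⟨fun h => absurd h.symm hp, hz ▸ isReduced_toWord⟩
  rw [toWord_mul, toWord_of, hz]
  exact hred.reduce_eq

theorem fst_eq_of_commute_of_toWord_eq_cons [DecidableEq α] {x : α} {z : FreeGroup α}
    {p : α × Bool} {t : List (α × Bool)} (h : Commute z (of x)) (hz : z.toWord = p :: t) :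
    p.1 = x := by
  by_contra hp
  -- The word of `z * of x` is a sublist of `z.toWord ++ [(x, true)]` of the same length.
  have hsub : List.Sublist ((x, true) :: p :: t) (p :: t ++ [(x, true)]) := by
    rw [← toWord_of_mul_of_ne hz hp, ← h.eq, ← hz, ← toWord_of x]
    exact toWord_mul_sublist z (of x)
  have heq := hsub.eq_of_length (by simp)
  exact hp (congrArg Prod.fst (List.head_eq_of_cons_eq heq)).symm

theorem not_commute_of_of {a b : α} (hab : a ≠ b) : ¬Commute (of a) (of b) := by
  classical
  exact fun h => hab (fst_eq_of_commute_of_toWord_eq_cons h (toWord_of a))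

theorem eq_one_of_commute_of_of {a b : α} (hab : a ≠ b) {z : FreeGroup α}
    (ha : Commute z (of a)) (hb : Commute z (of b)) : z = 1 := by
  classical
  rw [← toWord_eq_nil_iff]
  cases hz : z.toWord with
  | nil => rfl
  | cons p t =>
    exact absurd ((fst_eq_of_commute_of_toWord_eq_cons ha hz).symm.trans
      (fst_eq_of_commute_of_toWord_eq_cons hb hz)) hab

theorem commute_of_subsingleton [Subsingleton α] (u v : FreeGroup α) : Commute u v := by
  cases isEmpty_or_nonempty α with
  | inl => exact Subsingleton.elim u v ▸ Commute.refl u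
  | inr hα =>
    have := uniqueOfSubsingleton hα.some
    exact mulEquivIntOfUnique.injective (by rw [_root_.map_mul, _root_.map_mul, mul_comm])

end FreeGroup

namespace IsFreeGroup

variable {G : Type*} [Group G] [IsFreeGroup G] {x y z : G}

theorem eq_one_of_mem_center (hxy : ¬Commute x y) (hz : z ∈ Subgroup.center G) : z = 1 := by
  let e := toFreeGroup G
  rcases subsingleton_or_nontrivial (Generators G) with hS | hS
  · refine absurd ?_ hxy
    simpa using (FreeGroup.commute_of_subsingleton (e x) (e y)).map e.symm
  · obtain ⟨a, b, hab⟩ := exists_pair_ne (Generators G)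
    have hcomm (w : FreeGroup (Generators G)) : Commute (e z) w := by
      have hzw : Commute z (e.symm w) := (Subgroup.mem_center_iff.1 hz _).symm
      simpa using hzw.map e
    exact (map_eq_one_iff e e.injective).1
      (FreeGroup.eq_one_of_commute_of_of hab (hcomm _) (hcomm _))

theorem eq_one_of_commute_of_not_commute (hxy : ¬Commute x y) (hx : Commute z x)
    (hy : Commute z y) : z = 1 := by
  -- `z` is central in its centralizer, which is free by Nielsen–Schreier.
  let C := Subgroup.centralizer {z}
  have hmem {g : G} (hg : Commute z g) : g ∈ C :=
    Subgroup.mem_centralizer_singleton_iff.2 hg.eq.symm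
  have hxy' : ¬Commute (⟨x, hmem hx⟩ : C) ⟨y, hmem hy⟩ := fun h =>
    hxy (congrArg Subtype.val h)
  have hz : (⟨z, hmem (Commute.refl z)⟩ : C) ∈ Subgroup.center C :=
    Subgroup.mem_center_iff.2 fun g => Subtype.ext (Subgroup.mem_centralizer_singleton_iff.1 g.2)
  exact congrArg Subtype.val (eq_one_of_mem_center hxy' hz)

end IsFreeGroup

namespace MonoidHom

variable {G₁ G₂ H₁ H₂ : Type*} [Group G₁] [Group G₂] [Group H₁] [Group H₂]

theorem eq_prodMap_of_offDiagonal_eq_one (φ : H₁ × H₂ →* G₁ × G₂)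
    (h₁ : ∀ v, (φ (1, v)).1 = 1) (h₂ : ∀ u, (φ (u, 1)).2 = 1) :
    φ = ((fst G₁ G₂).comp (φ.comp (inl H₁ H₂))).prodMap
      ((snd G₁ G₂).comp (φ.comp (inr H₁ H₂))) := by
  ext ⟨u, v⟩ <;>
  · rw [← mul_one u, ← one_mul v, ← Prod.mk_mul_mk, _root_.map_mul]
    simp [h₁, h₂]

theorem offDiagonal_eq_one_of_not_commute [IsFreeGroup G₁] [IsFreeGroup G₂]
    (φ : H₁ × H₂ →* G₁ × G₂) (hφ : Function.Injective φ)
    (hH₂ : ∃ v v' : H₂, ¬Commute v v') {u u' : H₁}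
    (h : ¬Commute (φ (u, 1)).1 (φ (u', 1)).1) :
    (∀ v, (φ (1, v)).1 = 1) ∧ ∀ u, (φ (u, 1)).2 = 1 := by
  have hcomm (u : H₁) (v : H₂) : Commute (φ (u, 1)) (φ (1, v)) :=
    (Prod.commute_iff.2 ⟨Commute.one_right u, Commute.one_left v⟩).map φ
  have h₁ (v : H₂) : (φ (1, v)).1 = 1 :=
    IsFreeGroup.eq_one_of_commute_of_not_commute h (Prod.commute_iff.1 (hcomm u v)).1.symm
      (Prod.commute_iff.1 (hcomm u' v)).1.symm
  obtain ⟨v, v', hv⟩ := hH₂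
  have hv' : ¬Commute (φ (1, v)).2 (φ (1, v')).2 := fun hc =>
    hv (Prod.commute_iff.1 (Commute.of_map hφ (Prod.commute_iff.2 ⟨by rw [h₁, h₁], hc⟩))).2
  exact ⟨h₁, fun u => IsFreeGroup.eq_one_of_commute_of_not_commute hv'
    (Prod.commute_iff.1 (hcomm u v)).2 (Prod.commute_iff.1 (hcomm u v')).2⟩

theorem exists_range_eq_prod_of_isFreeGroup [IsFreeGroup G₁] [IsFreeGroup G₂]
    (φ : H₁ × H₂ →* G₁ × G₂) (hφ : Function.Injective φ)
    (hH₁ : ∃ u u' : H₁, ¬Commute u u') (hH₂ : ∃ v v' : H₂, ¬Commute v v') :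
    ∃ (A : Subgroup G₁) (B : Subgroup G₂), φ.range = A.prod B := by
  obtain ⟨u, u', hu⟩ := hH₁
  have hφu : ¬Commute (φ (u, 1)) (φ (u', 1)) := fun h =>
    hu (Prod.commute_iff.1 (Commute.of_map hφ h)).1
  rcases not_and_or.1 (mt Prod.commute_iff.2 hφu) with h | h
  · obtain ⟨h₁, h₂⟩ := φ.offDiagonal_eq_one_of_not_commute hφ hH₂ h
    exact ⟨_, _, by rw [φ.eq_prodMap_of_offDiagonal_eq_one h₁ h₂, range_prodMap]⟩
  · -- The symmetric case: swap the factors of the target, then those of the source.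
    let ψ := (MulEquiv.prodComm : G₁ × G₂ ≃* G₂ × G₁).toMonoidHom.comp φ
    obtain ⟨h₁, h₂⟩ := ψ.offDiagonal_eq_one_of_not_commute
      ((MulEquiv.prodComm).injective.comp hφ) hH₂ h
    let χ := φ.comp (MulEquiv.prodComm : H₂ × H₁ ≃* H₁ × H₂).toMonoidHom
    have hχ : χ.range = φ.range := by
      rw [range_comp, range_eq_top_of_surjective _ (MulEquiv.prodComm).surjective, ← range_eq_map]
    exact ⟨_, _, by rw [← hχ, χ.eq_prodMap_of_offDiagonal_eq_one h₂ h₁, range_prodMap]⟩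

end MonoidHom

/-- Any subgroup of `⟨a,b⟩ × ⟨c,d⟩ = F₂ × F₂` that is itself isomorphic to
`F₂ × F₂` decomposes compatibly with the direct product: it has the form
`L₁ × L₂` with `L₁ ≤ ⟨a,b⟩` and `L₂ ≤ ⟨c,d⟩`. -/
theorem F2_prod_F2_subgroup_is_product
    (L : Subgroup (FreeGroup (Fin 2) × FreeGroup (Fin 2)))
    (hiso : Nonempty (L ≃* (FreeGroup (Fin 2) × FreeGroup (Fin 2)))) :
    ∃ (L₁ : Subgroup (FreeGroup (Fin 2))) (L₂ : Subgroup (FreeGroup (Fin 2))),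
      L = L₁.prod L₂ := by
  obtain ⟨e⟩ := hiso
  have hF₂ : ∃ u u' : FreeGroup (Fin 2), ¬Commute u u' :=
    ⟨_, _, FreeGroup.not_commute_of_of (show (0 : Fin 2) ≠ 1 by decide)⟩
  let φ := L.subtype.comp e.symm.toMonoidHom
  have hφ : φ.range = L := by
    rw [MonoidHom.range_comp, MonoidHom.range_eq_top_of_surjective _ e.symm.surjective,
      ← MonoidHom.range_eq_map, L.range_subtype]
  rw [← hφ]
  exact φ.exists_range_eq_prod_of_isFreeGroup
    (L.subtype_injective.comp e.symm.injective) hF₂ hF₂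
end

section
/- Let G be a group, {G_λ} a family of subgroups, and suppose for every triple of group elements forming a rank-3 free abelian subgroup there is a unique λ and unique right coset G_λ g with the subgroup contained in G_λ^g (the property from Case 1 of the theorem, for ranks 3 and 4). Then for the wreath product subgroup K = ℤ wr ℤ ≤ G with commutator subgroup basis {x_n} and shifting element t: the whole of [K,K] lies in a single conjugate G_λ^g, and moreover t ∈ G_λ^g, hence K ≤ G_λ^g. -/
/-- The conjugate `G_λ^g = g⁻¹ G_λ g` of a subgroup: `a ∈ conjSub fam lam g` iff
`g * a * g⁻¹ ∈ fam lam`. -/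
def conjSub {G Λ : Type*} [Group G] (fam : Λ → Subgroup G) (lam : Λ) (g : G) :
    Subgroup G :=
  Subgroup.comap (MulAut.conj g).toMonoidHom (fam lam)

/-- If every subgroup of `G` isomorphic to `ℤ³` or `ℤ⁴` is contained in a
conjugate `G_λ^g` for a unique pair `(λ, G_λ g)`, then a wreath-product
subgroup `K = ℤ wr ℤ` of `G`, given by a shifting element `t` and a commutator
basis `{x_n}` (any three or four of the `x_n` generating a free abelian group
of the corresponding rank), lies entirely in a single conjugate `G_λ^g`. -/
theorem wreath_in_single_conjugate
    (G Λ : Type*) [Group G] (fam : Λ → Subgroup G)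
    (huniq : ∀ r : ℕ, r = 3 ∨ r = 4 → ∀ H : Subgroup G,
      Nonempty (H ≃* Multiplicative (Fin r → ℤ)) →
      ∃ (lam : Λ) (g : G), H ≤ conjSub fam lam g ∧
        ∀ (lam' : Λ) (g' : G), H ≤ conjSub fam lam' g' →
          lam' = lam ∧ g' * g⁻¹ ∈ fam lam)
    (t : G) (x : ℤ → G)
    (hshift : ∀ n : ℤ, t * x n * t⁻¹ = x (n + 1))
    (hfree3 : ∀ a b c : ℤ, a < b → b < c →
      Nonempty (↥(Subgroup.closure {x a, x b, x c}) ≃*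
        Multiplicative (Fin 3 → ℤ)))
    (hfree4 : ∀ a b c d : ℤ, a < b → b < c → c < d →
      Nonempty (↥(Subgroup.closure {x a, x b, x c, x d}) ≃*
        Multiplicative (Fin 4 → ℤ))) :
    ∃ (lam : Λ) (g : G),
      Subgroup.closure (Set.range x ∪ {t}) ≤ conjSub fam lam g := by
  classical
  obtain ⟨lam, g, hle, huq⟩ := huniq 3 (Or.inl rfl)
    (Subgroup.closure {x 0, x 1, x 2}) (hfree3 0 1 2 (by norm_num) (by norm_num))
  have hconj_eq : ∀ (g' : G), g' * g⁻¹ ∈ fam lam →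
      conjSub fam lam g' = conjSub fam lam g := by
    intro g' hg'
    ext a
    simp only [conjSub, Subgroup.mem_comap, MulEquiv.coe_toMonoidHom, MulAut.conj_apply]
    constructor
    · intro h
      have := (fam lam).mul_mem ((fam lam).mul_mem ((fam lam).inv_mem hg') h) hg'
      convert this using 1
      group
    · intro h
      have := (fam lam).mul_mem ((fam lam).mul_mem hg' h) ((fam lam).inv_mem hg')
      convert this using 1
      group
  have hx : ∀ n : ℤ, x n ∈ conjSub fam lam g := by
    intro n
    by_cases h0 : n = 0 ∨ n = 1 ∨ n = 2
    · apply hle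
      apply Subgroup.subset_closure
      rcases h0 with rfl | rfl | rfl <;> simp
    · have hcase : n < 0 ∨ 2 < n := by omega
      rcases hcase with hn | hn
      · obtain ⟨lam4, g4, hle4, _⟩ := huniq 4 (Or.inr rfl)
          (Subgroup.closure {x n, x 0, x 1, x 2})
          (hfree4 n 0 1 2 hn (by norm_num) (by norm_num))
        have h012 : Subgroup.closure {x 0, x 1, x 2} ≤ conjSub fam lam4 g4 := by
          refine le_trans (Subgroup.closure_mono ?_) hle4
          intro y hy
          simp only [Set.mem_insert_iff, Set.mem_singleton_iff] at hy ⊢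
          tauto
        obtain ⟨hlam, hg⟩ := huq lam4 g4 h012
        subst hlam
        rw [← hconj_eq g4 hg]
        exact hle4 (Subgroup.subset_closure (by simp))
      · obtain ⟨lam4, g4, hle4, _⟩ := huniq 4 (Or.inr rfl)
          (Subgroup.closure {x 0, x 1, x 2, x n})
          (hfree4 0 1 2 n (by norm_num) (by norm_num) hn)
        have h012 : Subgroup.closure {x 0, x 1, x 2} ≤ conjSub fam lam4 g4 := by
          refine le_trans (Subgroup.closure_mono ?_) hle4
          intro y hy
          simp only [Set.mem_insert_iff, Set.mem_singleton_iff] at hy ⊢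
          tauto
        obtain ⟨hlam, hg⟩ := huq lam4 g4 h012
        subst hlam
        rw [← hconj_eq g4 hg]
        exact hle4 (Subgroup.subset_closure (by simp))
  have ht : t ∈ conjSub fam lam g := by
    obtain ⟨lam1, g1, hle1, huq1⟩ := huniq 3 (Or.inl rfl)
      (Subgroup.closure {x 1, x 2, x 3}) (hfree3 1 2 3 (by norm_num) (by norm_num))
    have hH1g : Subgroup.closure {x 1, x 2, x 3} ≤ conjSub fam lam g := by
      rw [Subgroup.closure_le]
      rintro y (rfl | rfl | rfl) <;> exact hx _
    have hH1gt : Subgroup.closure {x 1, x 2, x 3} ≤ conjSub fam lam (g * t) := by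
      rw [Subgroup.closure_le]
      have key : ∀ m : ℤ, x m ∈ conjSub fam lam (g * t) := by
        intro m
        have h1 : g * (t * x m * t⁻¹) * g⁻¹ ∈ fam lam := by
          rw [hshift m]
          have := hx (m + 1)
          simpa only [conjSub, Subgroup.mem_comap, MulEquiv.coe_toMonoidHom,
            MulAut.conj_apply] using this
        simp only [conjSub, Subgroup.mem_comap, MulEquiv.coe_toMonoidHom, MulAut.conj_apply]
        convert h1 using 1
        group
      rintro y (rfl | rfl | rfl) <;> exact key _
    obtain ⟨e1, h1⟩ := huq1 lam g hH1g
    obtain ⟨e2, h2⟩ := huq1 lam (g * t) hH1gt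
    have h3 : (g * t * g1⁻¹) * (g * g1⁻¹)⁻¹ ∈ fam lam1 :=
      (fam lam1).mul_mem h2 ((fam lam1).inv_mem h1)
    have h4 : g * t * g⁻¹ ∈ fam lam1 := by
      convert h3 using 1
      group
    simp only [conjSub, Subgroup.mem_comap, MulEquiv.coe_toMonoidHom, MulAut.conj_apply]
    rw [e1]
    exact h4
  refine ⟨lam, g, ?_⟩
  rw [Subgroup.closure_le]
  rintro y (⟨n, rfl⟩ | rfl)
  · exact hx n
  · exact ht
end

section
/- An immersion from a finite CW-complex (or finite graph) to itself is an isomorphism. Graph version: every locally injective graph homomorphism from a finite graph to itself that is a combinatorial map is a graph isomorphism. -/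
/-- A locally injective graph homomorphism from a finite connected graph to
itself is a graph isomorphism. -/
theorem self_immersion_is_iso
    (V : Type*) [Fintype V] (G : SimpleGraph V) (hconn : G.Connected)
    (f : G →g G) (hloc : ∀ v : V, Set.InjOn f (G.neighborSet v)) :
    ∃ e : G ≃g G, ∀ v : V, e v = f v := by
  classical
  -- iterates are homs
  have homIter : ∀ (k : ℕ) {u v : V}, G.Adj u v → G.Adj ((f : V → V)^[k] u) ((f : V → V)^[k] v) := by
    intro k
    induction k with
    | zero => intro u v h; simpa using h
    | succ k ih =>
      intro u v h
      simp only [Function.iterate_succ', Function.comp_apply]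
      exact f.map_adj (ih h)
  -- iterates are locally injective
  have injIter : ∀ (k : ℕ) (v : V), Set.InjOn ((f : V → V)^[k]) (G.neighborSet v) := by
    intro k
    induction k with
    | zero => intro v; simp [Set.injOn_id]
    | succ k ih =>
      intro v
      rw [Function.iterate_succ]
      refine Set.InjOn.comp (ih (f v)) (hloc v) ?_
      intro x hx
      exact f.map_adj hx
  -- find an idempotent iterate
  obtain ⟨m, n, hmn, heq⟩ : ∃ m n : ℕ, m < n ∧ (f : V → V)^[m] = (f : V → V)^[n] := by
    obtain ⟨m, n, hne, h⟩ := Finite.exists_ne_map_eq_of_infinite (fun k : ℕ => (f : V → V)^[k])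
    rcases lt_or_gt_of_ne hne with h' | h'
    · exact ⟨m, n, h', h⟩
    · exact ⟨n, m, h', h.symm⟩
  set p := n - m with hp
  have hp1 : 1 ≤ p := by omega
  have hstep : ∀ k, m ≤ k → (f : V → V)^[k + p] = (f : V → V)^[k] := by
    intro k hk
    have h1 : k + p = (k - m) + n := by omega
    have h2 : k = (k - m) + m := by omega
    rw [h1, Function.iterate_add, ← heq, ← Function.iterate_add, ← h2]
  have hmul : ∀ j k, m ≤ k → (f : V → V)^[k + j * p] = (f : V → V)^[k] := by
    intro j
    induction j with
    | zero => intro k hk; simp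
    | succ j ih =>
      intro k hk
      have h1 : k + (j + 1) * p = (k + p) + j * p := by ring
      rw [h1, ih _ (by omega), hstep k hk]
  set N := (m + 1) * p with hN
  have hN1 : 1 ≤ N := by
    rw [hN]; exact Nat.mul_pos (by omega) hp1
  have hNm : m ≤ N := by
    rw [hN]
    calc m ≤ (m + 1) * 1 := by omega
    _ ≤ (m + 1) * p := Nat.mul_le_mul_left _ hp1
  have hidem : (f : V → V)^[N + N] = (f : V → V)^[N] := by
    have h1 : N + N = N + (m + 1) * p := by rw [hN]
    rw [h1, hmul _ _ hNm]
  set e : V → V := (f : V → V)^[N] with he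
  have hee : ∀ v, e (e v) = e v := by
    intro v
    have h := congrFun hidem v
    rwa [Function.iterate_add_apply] at h
  -- fixed points of e are closed under adjacency
  have hclosed : ∀ s v : V, e s = s → G.Adj s v → e v = v := by
    intro s v hs hadj
    have h1 : G.Adj s (e v) := by
      have h2 := homIter N hadj
      rwa [← he, hs] at h2
    exact (injIter N s (by simpa using hadj) (by simpa using h1) (by rw [← he]; exact (hee v).symm)).symm
  -- fixed points propagate along walks
  have hreach : ∀ (u v : V), G.Walk u v → e u = u → e v = v := by
    intro u v w
    induction w with
    | nil => exact fun h => h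
    | cons h q ih => intro hu; exact ih (hclosed _ _ hu h)
  -- e = id
  have hid : ∀ v, e v = v := by
    obtain ⟨v₀⟩ := hconn.nonempty
    intro v
    exact hreach (e v₀) v (hconn (e v₀) v).some (hee v₀)
  -- inverse
  set g : V → V := (f : V → V)^[N - 1] with hg
  have hgf : ∀ v, g (f v) = v := by
    intro v
    have h1 : g (f v) = (f : V → V)^[N] v := by
      rw [hg, ← Function.iterate_succ_apply]
      congr 1; omega
    rw [h1, ← he, hid]
  have hfg : ∀ v, f (g v) = v := by
    intro v
    have hN' : N = (N - 1) + 1 := by omega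
    have h1 : (f : V → V)^[N] v = f (g v) := by
      rw [hg]
      conv_lhs => rw [hN']
      rw [Function.iterate_succ_apply']
    rw [← h1, ← he, hid]
  refine ⟨⟨⟨f, g, hgf, hfg⟩, ?_⟩, fun v => rfl⟩
  intro a b
  constructor
  · intro h
    simp only [Equiv.coe_fn_mk] at h
    have h2 := homIter (N - 1) h
    simp only [← hg] at h2
    rwa [hgf, hgf] at h2
  · exact fun h => f.map_adj h
end

section
/- Let 𝒢 be a finite connected graph with more than one vertex and no cut vertices, and let 𝒞 be the set of cycles of 𝒢. Define C₁ ∼ C₂ if the cycles share an edge, and let ≈ be the equivalence relation generated by ∼. Then the union of the cycles in any single ≈-class is all of 𝒢, i.e. 𝒞 forms a single ≈-class whose union of edges is the edge set of 𝒢. -/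
/-!
If `v` is not a cut vertex and `u v`, `v w` are edges with `u ≠ w`, a path from `w` to `u`
avoiding `v` closes up to a cycle through both edges. Hence the set of edges lying on cycles of
a fixed edge-sharing class is closed under passing to an adjacent edge, and by connectedness it
is the whole edge set. Any cycle shares one of its edges with a cycle of every class, so there
is only one class.
-/

/-- The type of cycles of a simple graph: closed walks that are cycles. -/
def GraphCycle {V : Type*} (G : SimpleGraph V) : Type _ :=
  Σ v : V, {w : G.Walk v v // w.IsCycle}

/-- Two cycles are elementarily related if they share an edge. -/
def cyclesShareEdge {V : Type*} {G : SimpleGraph V}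
    (c₁ c₂ : GraphCycle G) : Prop :=
  ∃ e : Sym2 V, e ∈ c₁.2.1.edges ∧ e ∈ c₂.2.1.edges

section

open SimpleGraph

variable {V : Type*} {G : SimpleGraph V}

theorem SimpleGraph.Reachable.mem_of_forall_adj_mem {s : Set V} {u v : V} (h : G.Reachable u v)
    (hs : ∀ ⦃a b⦄, G.Adj a b → a ∈ s → b ∈ s) (hu : u ∈ s) : v ∈ s := by
  obtain ⟨p⟩ := h
  induction p with
  | nil => exact hu
  | cons hab _ ih => exact ih (hs hab hu)

theorem SimpleGraph.Reachable.exists_isPath_of_induce {s : Set V} {u w : s}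
    (h : (G.induce s).Reachable u w) :
    ∃ p : G.Walk u w, p.IsPath ∧ ∀ x ∈ p.support, x ∈ s := by
  classical
  obtain ⟨q⟩ := h
  let p := q.toPath.val.map (Embedding.induce s).toHom
  have hp : p.IsPath := (Walk.isPath_map_iff_of_injective Subtype.val_injective).2 q.toPath.2
  have hps : ∀ x ∈ p.support, x ∈ s := by
    intro x hx
    rw [Walk.support_map] at hx
    obtain ⟨y, -, rfl⟩ := List.mem_map.1 hx
    exact y.2
  exact ⟨p, hp, hps⟩

theorem SimpleGraph.exists_isCycle_mem_edges_of_adj_of_adj {u v w : V} (huv : G.Adj u v)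
    (hvw : G.Adj v w) (huw : u ≠ w) (hv : (G.induce ({v}ᶜ : Set V)).Connected) :
    ∃ c : G.Walk u u, c.IsCycle ∧ s(u, v) ∈ c.edges ∧ s(v, w) ∈ c.edges := by
  obtain ⟨p, hp, hpv⟩ := (hv ⟨w, hvw.ne'⟩ ⟨u, huv.ne⟩).exists_isPath_of_induce
  have hvp : v ∉ p.support := fun h => hpv v h rfl
  refine ⟨.cons huv (.cons hvw p), ?_, by simp, by simp⟩
  refine (Walk.cons_isCycle_iff _ _).2 ⟨hp.cons hvp, ?_⟩
  rw [Walk.edges_cons, List.mem_cons, not_or]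
  exact ⟨by simp [huw, huv.ne], fun h => hvp (p.snd_mem_support_of_mem_edges h)⟩

namespace GraphCycle

theorem exists_mem_edges (c : GraphCycle G) : ∃ e, e ∈ c.2.1.edges :=
  List.exists_mem_of_ne_nil _ (Walk.edges_eq_nil.not.2 c.2.2.not_nil)

def classEdges (c₀ : GraphCycle G) : Set (Sym2 V) :=
  {e | ∃ c, Relation.EqvGen cyclesShareEdge c₀ c ∧ e ∈ c.2.1.edges}

theorem mem_classEdges_of_mem_edges {c₀ : GraphCycle G} {e : Sym2 V} (he : e ∈ c₀.2.1.edges) :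
    e ∈ classEdges c₀ :=
  ⟨c₀, .refl _, he⟩

theorem classEdges_subset_edgeSet (c₀ : GraphCycle G) : classEdges c₀ ⊆ G.edgeSet := by
  rintro e ⟨c, -, he⟩
  exact c.2.1.edges_subset_edgeSet he

theorem eqvGen_of_mem_classEdges {c₀ c : GraphCycle G} {e : Sym2 V} (he₀ : e ∈ classEdges c₀)
    (he : e ∈ c.2.1.edges) : Relation.EqvGen cyclesShareEdge c₀ c := by
  obtain ⟨c', hc', he'⟩ := he₀
  exact .trans _ _ _ hc' (.rel _ _ ⟨e, he', he⟩)

theorem mem_classEdges_of_adj {c₀ : GraphCycle G} {u a b : V}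
    (ha : (G.induce ({a}ᶜ : Set V)).Connected) (hua : s(u, a) ∈ classEdges c₀)
    (hab : G.Adj a b) : s(a, b) ∈ classEdges c₀ := by
  by_cases hub : u = b
  · subst hub
    rwa [Sym2.eq_swap]
  obtain ⟨c, hc, hua_c, hab_c⟩ := exists_isCycle_mem_edges_of_adj_of_adj
    (classEdges_subset_edgeSet c₀ hua) hab hub ha
  exact ⟨⟨u, c, hc⟩, eqvGen_of_mem_classEdges hua hua_c, hab_c⟩

theorem classEdges_eq_edgeSet (hconn : G.Connected)
    (hcut : ∀ v : V, (G.induce ({v}ᶜ : Set V)).Connected) (c₀ : GraphCycle G) :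
    classEdges c₀ = G.edgeSet := by
  refine (classEdges_subset_edgeSet c₀).antisymm ?_
  have hcovered : ∀ a, ∃ u, s(u, a) ∈ classEdges c₀ := by
    obtain ⟨e, he⟩ := c₀.exists_mem_edges
    induction e using Sym2.ind with
    | _ x y =>
      refine fun a => (hconn y a).mem_of_forall_adj_mem (s := {a | ∃ u, s(u, a) ∈ classEdges c₀})
        ?_ ⟨x, mem_classEdges_of_mem_edges he⟩
      rintro a b hab ⟨u, hua⟩
      exact ⟨a, mem_classEdges_of_adj (hcut a) hua hab⟩
  intro e he
  induction e using Sym2.ind with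
  | _ a b =>
    obtain ⟨u, hua⟩ := hcovered a
    exact mem_classEdges_of_adj (hcut a) hua he

end GraphCycle

end

open GraphCycle in
theorem cycles_single_class_of_no_cutvertex_general
    (V : Type*) (G : SimpleGraph V) (hconn : G.Connected)
    (hcut : ∀ v : V, (G.induce ({v}ᶜ : Set V)).Connected) :
    (∀ c₀ c₁ : GraphCycle G, Relation.EqvGen cyclesShareEdge c₀ c₁) ∧
    (∀ c₀ : GraphCycle G, ∀ e ∈ G.edgeSet,
      ∃ c : GraphCycle G,
        Relation.EqvGen cyclesShareEdge c₀ c ∧ e ∈ c.2.1.edges) := by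
  have hclass := classEdges_eq_edgeSet hconn hcut
  refine ⟨fun c₀ c₁ => ?_, fun c₀ e he => (hclass c₀).ge he⟩
  obtain ⟨e, he⟩ := c₁.exists_mem_edges
  exact eqvGen_of_mem_classEdges ((hclass c₀).ge (c₁.2.1.edges_subset_edgeSet he)) he

/-- In a finite connected graph with more than one vertex and no cut vertices,
the set of cycles forms a single equivalence class under the equivalence
relation generated by edge-sharing, and the union of the edges of the cycles in
any single class is the whole edge set of the graph. -/
theorem cycles_single_class_of_no_cutvertex
    (V : Type*) [Fintype V] (G : SimpleGraph V) (hconn : G.Connected)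
    (hcard : 1 < Fintype.card V)
    (hcut : ∀ v : V, (G.induce ({v}ᶜ : Set V)).Connected) :
    (∀ c₀ c₁ : GraphCycle G, Relation.EqvGen cyclesShareEdge c₀ c₁) ∧
    (∀ c₀ : GraphCycle G, ∀ e ∈ G.edgeSet,
      ∃ c : GraphCycle G,
        Relation.EqvGen cyclesShareEdge c₀ c ∧ e ∈ c.2.1.edges) :=
  cycles_single_class_of_no_cutvertex_general V G hconn hcut
end
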